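/- For every ε > 0 with μ − ε ∈ I and every c ≥ 0, P(∃ s ∈ ℕ, s ≥ 1, such that μ̂_s < μ − ε and kl(μ̂_s, μ − ε) ≥ c/s) ≤ (2V/ε²) · e^{−c}. -/

import Mathlib

open MeasureTheory ProbabilityTheory Real Set ENNReal Filter Topology

/-!
Write `μ - ε = b' θ'`; then `θ' < θ`. For `η ≤ θ` the moment generating function of `ν` at
`η - θ ≤ 0` is `exp (b η - b θ)`, so Chernoff's bound gives `P(μ̂ₛ ≤ b' η) ≤ exp (-s kl(b' η, μ))`;
by continuity of `kl(·, μ)` this extends to the closure of `I`, where `μ̂ₛ` lies almost surely.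
The three-point identity of the Bregman divergence `kl` gives
`kl(x, μ) ≥ kl(x, μ - ε) + kl(μ - ε, μ)` for `x ≤ μ - ε`, and `kl(μ - ε, μ) ≥ ε² / (2V)` since
`b'' ≤ V`. So the `s`-th event lies in `{μ̂ₛ ≤ x}` for the largest `x ≤ μ - ε` in the closure of
`I` with `kl(x, μ) ≥ c / s + ε² / (2V)`, and has probability at most `e^{-c} e^{-s ε² / (2V)}`.
A union bound and `∑_{s ≥ 1} e^{-s a} = 1 / (e^a - 1) ≤ 1 / a` conclude.
-/

theorem Convex.monotoneOn_of_hasDerivAt_nonneg {D : Set ℝ} (hD : Convex ℝ D) {f f' : ℝ → ℝ}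
    (hf : ∀ x ∈ D, HasDerivAt f (f' x) x) (hf' : ∀ x ∈ D, 0 ≤ f' x) : MonotoneOn f D :=
  monotoneOn_of_hasDerivWithinAt_nonneg hD
    (fun x hx => (hf x hx).continuousAt.continuousWithinAt)
    (fun x hx => (hf x (interior_subset hx)).hasDerivWithinAt)
    (fun x hx => hf' x (interior_subset hx))

theorem Convex.strictMonoOn_of_hasDerivAt_pos {D : Set ℝ} (hD : Convex ℝ D) {f f' : ℝ → ℝ}
    (hf : ∀ x ∈ D, HasDerivAt f (f' x) x) (hf' : ∀ x ∈ D, 0 < f' x) : StrictMonoOn f D :=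
  strictMonoOn_of_hasDerivWithinAt_pos hD
    (fun x hx => (hf x hx).continuousAt.continuousWithinAt)
    (fun x hx => (hf x (interior_subset hx)).hasDerivWithinAt)
    (fun x hx => hf' x (interior_subset hx))

theorem sq_deriv_sub_div_le_bregman {f f' f'' : ℝ → ℝ} {a b V : ℝ} (hab : a ≤ b) (hV : 0 < V)
    (hf : ∀ t ∈ Icc a b, HasDerivAt f (f' t) t) (hf' : ∀ t ∈ Icc a b, HasDerivAt f' (f'' t) t)
    (hf''_nonneg : ∀ t ∈ Icc a b, 0 ≤ f'' t) (hf''_le : ∀ t ∈ Icc a b, f'' t ≤ V) :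
    (f' b - f' a) ^ 2 / (2 * V) ≤ f b - f a - f' a * (b - a) := by
  have hf'_mono : MonotoneOn f' (Icc a b) :=
    (convex_Icc a b).monotoneOn_of_hasDerivAt_nonneg hf' hf''_nonneg
  set φ : ℝ → ℝ := fun t => f t - f a - f' a * (t - a) - (f' t - f' a) ^ 2 / (2 * V)
  have hφ : ∀ t ∈ Icc a b, HasDerivAt φ ((f' t - f' a) * (1 - f'' t / V)) t := by
    intro t ht
    refine ((((hf t ht).sub_const (f a)).sub
      (((hasDerivAt_id t).sub_const a).const_mul (f' a))).sub
      ((((hf' t ht).sub_const (f' a)).pow 2).div_const (2 * V))).congr_deriv ?_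
    field_simp
    ring
  have hφ_mono : MonotoneOn φ (Icc a b) := by
    refine (convex_Icc a b).monotoneOn_of_hasDerivAt_nonneg hφ fun t ht => mul_nonneg ?_ ?_
    · exact sub_nonneg.2 (hf'_mono (left_mem_Icc.2 hab) ht ht.1)
    · exact sub_nonneg.2 ((div_le_one hV).2 (hf''_le t ht))
  have hφab := hφ_mono (left_mem_Icc.2 hab) (right_mem_Icc.2 hab) hab
  simp only [φ, sub_self, mul_zero, ne_eq, OfNat.ofNat_ne_zero, not_false_eq_true, zero_pow,
    zero_div] at hφab
  linarith

theorem convex_setOf_integrable_exp_mul (ρ : Measure ℝ) :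
    Convex ℝ {θ : ℝ | Integrable (fun x => exp (θ * x)) ρ} := by
  intro θ₁ h₁ θ₂ h₂ p q hp hq hpq
  refine ((h₁.const_mul p).add (h₂.const_mul q)).mono'
    (by fun_prop : Continuous fun x => exp ((p • θ₁ + q • θ₂) * x)).aestronglyMeasurable
    (ae_of_all _ fun x => ?_)
  rw [norm_of_nonneg (exp_pos _).le, smul_eq_mul, smul_eq_mul, add_mul, mul_assoc, mul_assoc]
  exact convexOn_exp.2 (mem_univ _) (mem_univ _) hp hq hpq

theorem Set.OrdConnected.Ioc_subset_of_mem_closure {I : Set ℝ} (hI : I.OrdConnected) {x m : ℝ}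
    (hx : x ∈ closure I) (hm : m ∈ I) : Ioc x m ⊆ I := fun z hz =>
  let ⟨_, hiz, hi⟩ := mem_closure_iff_nhds.1 hx (Iio z) (Iio_mem_nhds hz.1)
  hI.out hi hm ⟨le_of_lt hiz, hz.2⟩

theorem Convex.sum_range_div_mem {C : Set ℝ} (hC : Convex ℝ C) {s : ℕ} (hs : 0 < s)
    {x : ℕ → ℝ} (hx : ∀ i ∈ Finset.range s, x i ∈ C) :
    (∑ i ∈ Finset.range s, x i) / s ∈ C := by
  convert hC.centerMass_mem (w := fun _ => 1) (fun _ _ => zero_le_one) (by simpa using hs) hx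
    using 1
  simp [Finset.centerMass, div_eq_inv_mul]

section Divergence

variable {Θ₀ : Set ℝ} {b b' : ℝ → ℝ} {kl : ℝ → ℝ → ℝ}

theorem kl_add_kl_le_kl_of_mem_closure {I : Set ℝ} (hI : I = b' '' Θ₀)
    (hkl : ∀ θ ∈ Θ₀, ∀ θ' ∈ Θ₀, kl (b' θ) (b' θ') = b θ' - b θ - b' θ * (θ' - θ))
    (hklcont : ∀ μ' ∈ I, ContinuousOn (fun x => kl x μ') (closure I))
    {θ₁ θ₂ : ℝ} (h₁ : θ₁ ∈ Θ₀) (h₂ : θ₂ ∈ Θ₀) (h₁₂ : θ₁ ≤ θ₂)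
    {x : ℝ} (hx : x ∈ closure I) (hx₁ : x ≤ b' θ₁) :
    kl x (b' θ₁) + kl (b' θ₁) (b' θ₂) ≤ kl x (b' θ₂) := by
  subst hI
  have three_point : EqOn (fun x => kl x (b' θ₂))
      (fun x => kl x (b' θ₁) + kl (b' θ₁) (b' θ₂) + (b' θ₁ - x) * (θ₂ - θ₁))
      (closure (b' '' Θ₀)) := by
    refine EqOn.of_subset_closure ?_ (hklcont _ (mem_image_of_mem b' h₂))
      (((hklcont _ (mem_image_of_mem b' h₁)).add continuousOn_const).add (by fun_prop))
      subset_closure subset_rfl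
    rintro _ ⟨η, hη, rfl⟩
    simp only [hkl η hη θ₂ h₂, hkl η hη θ₁ h₁, hkl θ₁ h₁ θ₂ h₂]
    ring
  rw [show kl x (b' θ₂) = _ from three_point hx]
  nlinarith [mul_nonneg (sub_nonneg.2 hx₁) (sub_nonneg.2 h₁₂)]

theorem sq_deriv_sub_div_le_kl (hΘ₀ : Θ₀.OrdConnected) {b'' : ℝ → ℝ}
    (hb' : ∀ θ ∈ Θ₀, HasDerivAt b (b' θ) θ) (hb'' : ∀ θ ∈ Θ₀, HasDerivAt b' (b'' θ) θ)
    (hb''_nonneg : ∀ θ ∈ Θ₀, 0 ≤ b'' θ)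
    (hkl : ∀ θ ∈ Θ₀, ∀ θ' ∈ Θ₀, kl (b' θ) (b' θ') = b θ' - b θ - b' θ * (θ' - θ))
    {V : ℝ} (hV : 0 < V) (hbV : ∀ θ ∈ Θ₀, b'' θ ≤ V)
    {θ₁ θ₂ : ℝ} (h₁ : θ₁ ∈ Θ₀) (h₂ : θ₂ ∈ Θ₀) (h₁₂ : θ₁ ≤ θ₂) :
    (b' θ₂ - b' θ₁) ^ 2 / (2 * V) ≤ kl (b' θ₁) (b' θ₂) := by
  have hsub : Icc θ₁ θ₂ ⊆ Θ₀ := hΘ₀.out h₁ h₂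
  rw [hkl θ₁ h₁ θ₂ h₂]
  exact sq_deriv_sub_div_le_bregman h₁₂ hV (fun t ht => hb' t (hsub ht))
    (fun t ht => hb'' t (hsub ht)) (fun t ht => hb''_nonneg t (hsub ht))
    (fun t ht => hbV t (hsub ht))

end Divergence

theorem exp_mul_sub_mul_exp_sub_mul (θ η a x : ℝ) :
    exp (θ * x - a) * exp ((η - θ) * x) = exp (η * x) * exp (-a) := by
  rw [← exp_add, ← exp_add]
  ring_nf

section Tilting

variable {ρ : Measure ℝ} {θ η a : ℝ}

theorem integrable_exp_mul_withDensity_exp (hη : Integrable (fun x => exp (η * x)) ρ) :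
    Integrable (fun x => exp ((η - θ) * x))
      (ρ.withDensity fun x => ENNReal.ofReal (exp (θ * x - a))) := by
  rw [integrable_withDensity_iff (by fun_prop) (ae_of_all _ fun _ => ofReal_lt_top)]
  simp_rw [toReal_ofReal (exp_pos _).le, mul_comm (exp ((_ - θ) * _)),
    exp_mul_sub_mul_exp_sub_mul]
  exact hη.mul_const _

theorem mgf_id_withDensity_exp :
    mgf id (ρ.withDensity fun x => ENNReal.ofReal (exp (θ * x - a))) (η - θ) =
      exp (-a) * ∫ x, exp (η * x) ∂ρ := by
  rw [mgf, integral_withDensity_eq_integral_toReal_smul (by fun_prop)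
    (ae_of_all _ fun _ => ofReal_lt_top)]
  simp_rw [toReal_ofReal (exp_pos _).le, smul_eq_mul, id, exp_mul_sub_mul_exp_sub_mul]
  rw [integral_mul_const, mul_comm]

end Tilting

section Deviation

variable {Ω : Type*} [MeasurableSpace Ω] {P : Measure Ω}

theorem measure_sum_range_le_le_exp_mul_mgf_pow {ν : Measure ℝ} {X : ℕ → Ω → ℝ}
    (hXmeas : ∀ i, Measurable (X i)) (hXlaw : ∀ i, P.map (X i) = ν) (hXindep : iIndepFun X P)
    {t : ℝ} (ht : t ≤ 0) (hint : Integrable (fun x => exp (t * x)) ν) (s : ℕ) (y : ℝ) :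
    P {ω | ∑ i ∈ Finset.range s, X i ω ≤ y} ≤
      ENNReal.ofReal (exp (-t * y) * mgf id ν t ^ s) := by
  have : IsProbabilityMeasure P := hXindep.isProbabilityMeasure
  have hXint : ∀ i, Integrable (fun ω => exp (t * X i ω)) P := fun i =>
    (integrable_map_measure (g := fun x => exp (t * x)) (by fun_prop)
      (hXmeas i).aemeasurable).1 (hXlaw i ▸ hint)
  have hXmgf : ∀ i, mgf (X i) P t = mgf id ν t := fun i => by
    rw [← hXlaw i, mgf_id_map (hXmeas i).aemeasurable]
  have h := measure_le_le_exp_mul_mgf y ht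
    (hXindep.integrable_exp_mul_sum hXmeas (s := Finset.range s) fun i _ => hXint i)
  rw [hXindep.mgf_sum hXmeas, Finset.prod_congr rfl fun i _ => hXmgf i, Finset.prod_const,
    Finset.card_range] at h
  rw [ENNReal.le_ofReal_iff_toReal_le (measure_ne_top _ _)
    (mul_nonneg (exp_pos _).le (pow_nonneg mgf_nonneg _))]
  simpa only [Finset.sum_apply, measureReal_def] using h

theorem measure_sum_range_div_le_le_exp_neg_kl {ρ : Measure ℝ} {b b' : ℝ → ℝ}
    {kl : ℝ → ℝ → ℝ} {θ η : ℝ} (hηθ : η ≤ θ)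
    (hkl : kl (b' η) (b' θ) = b θ - b η - b' η * (θ - η))
    (hint : Integrable (fun x => exp (η * x)) ρ) (hbη : b η = log (∫ x, exp (η * x) ∂ρ))
    {X : ℕ → Ω → ℝ} (hXmeas : ∀ i, Measurable (X i))
    (hXlaw : ∀ i, P.map (X i) = ρ.withDensity fun x => ENNReal.ofReal (exp (θ * x - b θ)))
    (hXindep : iIndepFun X P) {s : ℕ} (hs : 0 < s) :
    P {ω | (∑ i ∈ Finset.range s, X i ω) / s ≤ b' η} ≤
      ENNReal.ofReal (exp (-(s * kl (b' η) (b' θ)))) := by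
  have : IsProbabilityMeasure P := hXindep.isProbabilityMeasure
  have : NeZero ρ := ⟨by
    rintro rfl
    have := Measure.isProbabilityMeasure_map (hXmeas 0).aemeasurable (μ := P)
    exact IsProbabilityMeasure.ne_zero _ ((hXlaw 0).trans (withDensity_zero_left _))⟩
  have hmgf : ∫ x, exp (η * x) ∂ρ = exp (b η) := by rw [hbη, exp_log (integral_exp_pos hint)]
  have h := measure_sum_range_le_le_exp_mul_mgf_pow hXmeas hXlaw hXindep
    (sub_nonpos.2 hηθ) (integrable_exp_mul_withDensity_exp hint)
    s (s * b' η)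
  rw [mgf_id_withDensity_exp, hmgf, ← exp_add, ← exp_nat_mul] at h
  have hs' : (0 : ℝ) < s := Nat.cast_pos.2 hs
  calc P {ω | (∑ i ∈ Finset.range s, X i ω) / s ≤ b' η}
      = P {ω | ∑ i ∈ Finset.range s, X i ω ≤ s * b' η} := by
        simp_rw [div_le_iff₀' hs']
    _ ≤ _ := h
    _ = _ := by rw [← exp_add, hkl]; ring_nf

theorem ae_sum_range_div_mem {C : Set ℝ} (hC : Convex ℝ C) (hCm : MeasurableSet C)
    {X : ℕ → Ω → ℝ} (hXmeas : ∀ i, Measurable (X i)) (hX : ∀ i, P.map (X i) Cᶜ = 0)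
    {s : ℕ} (hs : 0 < s) : ∀ᵐ ω ∂P, (∑ i ∈ Finset.range s, X i ω) / s ∈ C := by
  have hXC : ∀ i, ∀ᵐ ω ∂P, X i ω ∈ C := fun i =>
    (ae_map_iff (hXmeas i).aemeasurable hCm).1 (ae_iff.2 (hX i))
  filter_upwards [ae_all_iff.2 hXC] with ω hω
  exact hC.sum_range_div_mem hs fun i _ => hω i

variable {Y : Ω → ℝ} {g : ℝ → ℝ} {m r : ℝ}

theorem measure_le_le_exp_of_mem_closure {I : Set ℝ} (hI : I.OrdConnected)
    (hg : ContinuousOn g (closure I)) (hm : m ∈ I)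
    (hbound : ∀ y ∈ I, y ≤ m → P {ω | Y ω ≤ y} ≤ ENNReal.ofReal (exp (-(r * g y))))
    {y : ℝ} (hy : y ∈ closure I) (hym : y ≤ m) :
    P {ω | Y ω ≤ y} ≤ ENNReal.ofReal (exp (-(r * g y))) := by
  rcases hym.eq_or_lt with rfl | hym
  · exact hbound y hm le_rfl
  have hsub : Ioo y m ⊆ I := Ioo_subset_Ioc_self.trans (hI.Ioc_subset_of_mem_closure hy hm)
  have : (𝓝[Ioo y m] y).NeBot := left_nhdsWithin_Ioo_neBot hym
  have hlim : Tendsto (fun z => ENNReal.ofReal (exp (-(r * g z)))) (𝓝[Ioo y m] y)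
      (𝓝 (ENNReal.ofReal (exp (-(r * g y))))) :=
    ENNReal.tendsto_ofReal (((hg y hy).mono (hsub.trans subset_closure)).const_mul r).neg.rexp
  refine ge_of_tendsto hlim (eventually_nhdsWithin_of_forall fun z hz => ?_)
  exact (measure_mono fun ω (hω : Y ω ≤ y) => hω.trans hz.1.le).trans
    (hbound z (hsub hz) hz.2.le)

theorem measure_mem_and_le_and_ge_le_exp {C : Set ℝ} (hC : IsClosed C) (hg : ContinuousOn g C)
    (hr : 0 ≤ r)
    (hbound : ∀ y ∈ C, y ≤ m → P {ω | Y ω ≤ y} ≤ ENNReal.ofReal (exp (-(r * g y)))) (d : ℝ) :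
    P {ω | Y ω ∈ C ∧ Y ω ≤ m ∧ d ≤ g (Y ω)} ≤ ENNReal.ofReal (exp (-(r * d))) := by
  set S := C ∩ g ⁻¹' Ici d ∩ Iic m
  have hevent : {ω | Y ω ∈ C ∧ Y ω ≤ m ∧ d ≤ g (Y ω)} = Y ⁻¹' S := by
    ext ω
    simp only [S, mem_ofPred_eq, mem_preimage, mem_inter_iff, mem_Ici, mem_Iic]
    tauto
  rcases S.eq_empty_or_nonempty with hS | hS
  · simp [hevent, hS]
  have hSbdd : BddAbove S := ⟨m, fun x hx => hx.2⟩
  obtain ⟨⟨hC_sup, hd_sup⟩, hm_sup⟩ :=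
    ((hg.preimage_isClosed_of_isClosed hC isClosed_Ici).inter isClosed_Iic).csSup_mem hS hSbdd
  calc P {ω | Y ω ∈ C ∧ Y ω ≤ m ∧ d ≤ g (Y ω)} ≤ P {ω | Y ω ≤ sSup S} :=
        hevent ▸ measure_mono fun ω hω => le_csSup hSbdd hω
    _ ≤ ENNReal.ofReal (exp (-(r * g (sSup S)))) := hbound _ hC_sup hm_sup
    _ ≤ ENNReal.ofReal (exp (-(r * d))) :=
        ofReal_le_ofReal (exp_le_exp.2 (neg_le_neg (mul_le_mul_of_nonneg_left hd_sup hr)))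

theorem measure_lt_and_le_le_exp {I : Set ℝ} (hI : I.OrdConnected) {f : ℝ → ℝ} {K : ℝ}
    (hm : m ∈ I) (hg : ContinuousOn g (closure I))
    (hfg : ∀ x ∈ closure I, x ≤ m → f x + K ≤ g x) (hY : ∀ᵐ ω ∂P, Y ω ∈ closure I)
    (hr : 0 ≤ r)
    (hbound : ∀ y ∈ I, y ≤ m → P {ω | Y ω ≤ y} ≤ ENNReal.ofReal (exp (-(r * g y)))) (d : ℝ) :
    P {ω | Y ω < m ∧ d ≤ f (Y ω)} ≤ ENNReal.ofReal (exp (-(r * (d + K)))) :=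
  calc P {ω | Y ω < m ∧ d ≤ f (Y ω)}
      ≤ P {ω | Y ω ∈ closure I ∧ Y ω ≤ m ∧ d + K ≤ g (Y ω)} := by
        refine measure_mono_ae ?_
        filter_upwards [hY] with ω hω ⟨hlt, hd⟩
        exact ⟨hω, hlt.le, by linarith [hfg _ hω hlt.le]⟩
    _ ≤ _ := measure_mem_and_le_and_ge_le_exp isClosed_closure hg hr
        (fun _ hy hym => measure_le_le_exp_of_mem_closure hI hg hm hbound hy hym) _

theorem measure_setOf_exists_le_div_of_le_mul_exp {A : ℕ → Set Ω} {C a : ℝ} (hC : 0 ≤ C)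
    (ha : 0 < a) (hA : ∀ s : ℕ, 1 ≤ s → P (A s) ≤ ENNReal.ofReal (C * exp (-(a * s)))) :
    P {ω | ∃ s : ℕ, 1 ≤ s ∧ ω ∈ A s} ≤ ENNReal.ofReal (C / a) := by
  have hunion : {ω | ∃ s : ℕ, 1 ≤ s ∧ ω ∈ A s} = ⋃ n : ℕ, A (n + 1) := by
    ext ω
    simp only [mem_ofPred_eq, mem_iUnion]
    exact ⟨fun ⟨s, hs, hω⟩ => ⟨s - 1, by rwa [Nat.sub_add_cancel hs]⟩,
      fun ⟨n, hω⟩ => ⟨n + 1, Nat.le_add_left 1 n, hω⟩⟩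
  have hq : exp (-a) < 1 := exp_lt_one_iff.2 (neg_lt_zero.2 ha)
  calc P {ω | ∃ s : ℕ, 1 ≤ s ∧ ω ∈ A s} ≤ ∑' n : ℕ, P (A (n + 1)) :=
        hunion ▸ measure_iUnion_le _
    _ ≤ ∑' n : ℕ, ENNReal.ofReal C * ENNReal.ofReal (exp (-a)) ^ (n + 1) := by
        refine ENNReal.tsum_le_tsum fun n => (hA (n + 1) (Nat.le_add_left 1 n)).trans_eq ?_
        rw [← ofReal_pow (exp_pos _).le, ← exp_nat_mul, ← ofReal_mul hC]
        push_cast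
        ring_nf
    _ = ENNReal.ofReal (C * (exp (-a) / (1 - exp (-a)))) := by
        rw [ENNReal.tsum_mul_left, ENNReal.tsum_geometric_add_one, ← ofReal_one,
          ← ofReal_sub _ (exp_pos _).le, ← ofReal_inv_of_pos (sub_pos.2 hq),
          ← ofReal_mul (exp_pos _).le, ← ofReal_mul hC, div_eq_mul_inv]
    _ ≤ ENNReal.ofReal (C / a) := by
        refine ofReal_le_ofReal ?_
        rw [div_eq_mul_one_div C a]
        refine mul_le_mul_of_nonneg_left ?_ hC
        rw [div_le_div_iff₀ (sub_pos.2 hq) ha]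
        nlinarith [add_one_le_exp a, exp_pos (-a), exp_neg a, mul_inv_cancel₀ (exp_pos a).ne']

end Deviation

theorem prob_deviation_below_le_general
    (ρ : Measure ℝ)
    (Θ : Set ℝ) (hΘ : Θ = {θ : ℝ | Integrable (fun x => exp (θ * x)) ρ})
    (b b' b'' : ℝ → ℝ)
    (hb : ∀ θ ∈ Θ, b θ = log (∫ x, exp (θ * x) ∂ρ))
    (hb' : ∀ θ ∈ interior Θ, HasDerivAt b (b' θ) θ)
    (hb'' : ∀ θ ∈ interior Θ, HasDerivAt b' (b'' θ) θ)
    (hbpos : ∀ θ ∈ interior Θ, 0 < b'' θ)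
    (Iset : Set ℝ) (hI : Iset = b' '' (interior Θ))
    (kl : ℝ → ℝ → ℝ)
    (hkl : ∀ θ ∈ interior Θ, ∀ θ' ∈ interior Θ,
      kl (b' θ) (b' θ') = b θ' - b θ - b' θ * (θ' - θ))
    (hklcont : ∀ μ' ∈ Iset, ContinuousOn (fun x => kl x μ') (closure Iset))
    (V : ℝ) (hV : 0 < V) (hbV : ∀ θ ∈ interior Θ, b'' θ ≤ V)
    (θ : ℝ) (hθ : θ ∈ interior Θ)
    (ν : Measure ℝ) (hν : ν = ρ.withDensity (fun x => ENNReal.ofReal (exp (θ * x - b θ))))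
    (hsupp : ν (closure Iset)ᶜ = 0)
    (μ : ℝ) (hμ : μ = b' θ)
    (Ω : Type*) [MeasurableSpace Ω] (P : Measure Ω)
    (X : ℕ → Ω → ℝ) (hXmeas : ∀ i, Measurable (X i))
    (hXlaw : ∀ i, Measure.map (X i) P = ν)
    (hXindep : ProbabilityTheory.iIndepFun X P)
    (μhat : ℕ → Ω → ℝ) (hμhat : ∀ s ω, μhat s ω = (∑ i ∈ Finset.range s, X i ω) / s)
    (ε : ℝ) (hε : 0 < ε) (hμε : μ - ε ∈ Iset) (c : ℝ) :
    P {ω | ∃ s : ℕ, 1 ≤ s ∧ μhat s ω < μ - ε ∧ c / s ≤ kl (μhat s ω) (μ - ε)} ≤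
      ENNReal.ofReal (2 * V / ε ^ 2 * Real.exp (-c)) := by
  subst hν
  obtain ⟨θ', hθ', hθ'μ⟩ : μ - ε ∈ b' '' interior Θ := hI ▸ hμε
  have hint : ∀ η ∈ Θ, Integrable (fun x => exp (η * x)) ρ := by rw [hΘ]; exact fun η hη => hη
  have hconv : Convex ℝ (interior Θ) := (hΘ ▸ convex_setOf_integrable_exp_mul ρ).interior
  have hmono : StrictMonoOn b' (interior Θ) := hconv.strictMonoOn_of_hasDerivAt_pos hb'' hbpos
  have hθ'θ : θ' ≤ θ := (hmono.le_iff_le hθ' hθ).1 (by linarith)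
  have hIord : Iset.OrdConnected := hI ▸ (hconv.isPreconnected.image b' fun η hη =>
    (hb'' η hη).continuousAt.continuousWithinAt).ordConnected
  have hμI : μ ∈ Iset := by rw [hI, hμ]; exact mem_image_of_mem b' hθ
  have hgap : ∀ x ∈ closure Iset, x ≤ μ - ε → kl x (μ - ε) + ε ^ 2 / (2 * V) ≤ kl x μ := by
    intro x hx hxm
    have h3 := kl_add_kl_le_kl_of_mem_closure hI hkl hklcont hθ' hθ hθ'θ hx (hθ'μ ▸ hxm)
    have hK := sq_deriv_sub_div_le_kl hconv.ordConnected hb' hb'' (fun η hη => (hbpos η hη).le)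
      hkl hV hbV hθ' hθ hθ'θ
    rw [hθ'μ, ← hμ] at h3 hK
    rw [_root_.sub_sub_cancel] at hK
    linarith
  have hchern : ∀ s : ℕ, 0 < s → ∀ y ∈ Iset, y ≤ μ - ε →
      P {ω | μhat s ω ≤ y} ≤ ENNReal.ofReal (exp (-(s * kl y μ))) := by
    intro s hs y hy hyμ
    obtain ⟨η, hη, rfl⟩ : y ∈ b' '' interior Θ := hI ▸ hy
    simp only [hμhat, hμ]
    exact measure_sum_range_div_le_le_exp_neg_kl ((hmono.le_iff_le hη hθ).1 (by linarith))
      (hkl η hη θ hθ) (hint η (interior_subset hη)) (hb η (interior_subset hη)) hXmeas hXlaw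
      hXindep hs
  refine (measure_setOf_exists_le_div_of_le_mul_exp (exp_pos (-c)).le (a := ε ^ 2 / (2 * V))
    (by positivity) fun s hs => ?_).trans_eq (by congr 1; field_simp)
  have hmean : ∀ᵐ ω ∂P, μhat s ω ∈ closure Iset := by
    simpa only [hμhat] using ae_sum_range_div_mem hIord.convex.closure
      isClosed_closure.measurableSet hXmeas (fun i => by rw [hXlaw i]; exact hsupp) hs
  refine (measure_lt_and_le_le_exp hIord hμε (hklcont μ hμI) hgap hmean s.cast_nonneg
    (hchern s hs) (c / s)).trans_eq ?_
  rw [← exp_add]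
  congr 2
  field_simp
  ring

/-- For every `ε > 0` with `μ - ε ∈ I` and every `c ≥ 0`,
`P(∃ s ≥ 1, μ̂ₛ < μ - ε ∧ kl (μ̂ₛ, μ - ε) ≥ c / s) ≤ (2V / ε²) · e^{-c}`. -/
theorem prob_deviation_below_le
    (ρ : Measure ℝ) [SigmaFinite ρ]
    (Θ : Set ℝ) (hΘ : Θ = {θ : ℝ | Integrable (fun x => exp (θ * x)) ρ})
    (b b' b'' : ℝ → ℝ)
    (hb : ∀ θ ∈ Θ, b θ = log (∫ x, exp (θ * x) ∂ρ))
    (hb' : ∀ θ ∈ interior Θ, HasDerivAt b (b' θ) θ)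
    (hb'' : ∀ θ ∈ interior Θ, HasDerivAt b' (b'' θ) θ)
    (hbpos : ∀ θ ∈ interior Θ, 0 < b'' θ)
    (Iset : Set ℝ) (hI : Iset = b' '' (interior Θ))
    (kl : ℝ → ℝ → ℝ)
    (hkl : ∀ θ ∈ interior Θ, ∀ θ' ∈ interior Θ,
      kl (b' θ) (b' θ') = b θ' - b θ - b' θ * (θ' - θ))
    (hklcont : ∀ μ' ∈ Iset, ContinuousOn (fun x => kl x μ') (closure Iset))
    (V : ℝ) (hV : 0 < V) (hbV : ∀ θ ∈ interior Θ, b'' θ ≤ V)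
    (θ : ℝ) (hθ : θ ∈ interior Θ)
    (ν : Measure ℝ) (hν : ν = ρ.withDensity (fun x => ENNReal.ofReal (exp (θ * x - b θ))))
    (hsupp : ν (closure Iset)ᶜ = 0)
    (μ : ℝ) (hμ : μ = b' θ)
    (Ω : Type*) [MeasurableSpace Ω] (P : Measure Ω) [IsProbabilityMeasure P]
    (X : ℕ → Ω → ℝ) (hXmeas : ∀ i, Measurable (X i))
    (hXlaw : ∀ i, Measure.map (X i) P = ν)
    (hXindep : ProbabilityTheory.iIndepFun X P)
    (μhat : ℕ → Ω → ℝ) (hμhat : ∀ s ω, μhat s ω = (∑ i ∈ Finset.range s, X i ω) / s)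
    (ε : ℝ) (hε : 0 < ε) (hμε : μ - ε ∈ Iset) (c : ℝ) (hc : 0 ≤ c) :
    P {ω | ∃ s : ℕ, 1 ≤ s ∧ μhat s ω < μ - ε ∧ c / s ≤ kl (μhat s ω) (μ - ε)} ≤
      ENNReal.ofReal (2 * V / ε ^ 2 * Real.exp (-c)) :=
  prob_deviation_below_le_general ρ Θ hΘ b b' b'' hb hb' hb'' hbpos Iset hI kl hkl hklcont V hV hbV
    θ hθ ν hν hsupp μ hμ Ω P X hXmeas hXlaw hXindep μhat hμhat ε hε hμε c
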